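/- arXiv:1802.08881 — 3 statements merged into one kernel-verified Lean document; each statement's English description precedes it below -/
import Mathlib

section
/- For positive reals v₁*, ..., v_N* and every integer m ≥ 1, the polynomial p_m(x) = Σ_{k=1}^N ( (Σ_{n=1}^N v_n*²)/(v_k*)^{m−1} · x_k^{m+1} − Σ_{j=1}^N (v_k* v_j*)/(v_k*)^{m−1} · x_k^m x_j ) is nonnegative on the nonnegative orthant ℝ^N_{≥0}. -/
/-!
Substituting `t k = x k / v k` and `w k = v k ^ 2` turns the `k`-th summand into
`∑ j, w k * w j * (t k ^ m * (t k - t j))`. Symmetrising the double sum in `k` and `j` gives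
`½ ∑ k, ∑ j, w k * w j * (t k ^ m - t j ^ m) * (t k - t j)`, which is nonnegative because
`t ↦ t ^ m` is monotone on `[0, ∞)`.
-/

open Finset

theorem MonovaryOn.sum_sum_mul_mul_sub_nonneg {ι R : Type*} [CommRing R] [LinearOrder R]
    [IsStrictOrderedRing R] {s : Finset ι} {f g w : ι → R} (hfg : MonovaryOn f g s)
    (hw : ∀ i ∈ s, 0 ≤ w i) :
    0 ≤ ∑ i ∈ s, ∑ j ∈ s, w i * w j * (f i * (g i - g j)) := by
  have hswap : ∑ i ∈ s, ∑ j ∈ s, w i * w j * (f i * (g i - g j))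
      = ∑ i ∈ s, ∑ j ∈ s, w i * w j * (f j * (g j - g i)) := by
    rw [sum_comm]
    exact sum_congr rfl fun i _ => sum_congr rfl fun j _ => by ring
  have hpairs : 0 ≤ ∑ i ∈ s, ∑ j ∈ s, w i * w j * ((f i - f j) * (g i - g j)) :=
    sum_nonneg fun i hi => sum_nonneg fun j hj =>
      mul_nonneg (mul_nonneg (hw i hi) (hw j hj)) (hfg.sub_mul_sub_nonneg hj hi)
  have hsplit : ∑ i ∈ s, ∑ j ∈ s, w i * w j * ((f i - f j) * (g i - g j))
      = ∑ i ∈ s, ∑ j ∈ s, w i * w j * (f i * (g i - g j))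
        + ∑ i ∈ s, ∑ j ∈ s, w i * w j * (f j * (g j - g i)) := by
    simp only [← sum_add_distrib]
    exact sum_congr rfl fun i _ => sum_congr rfl fun j _ => by ring
  linarith

theorem monovary_pow_self_of_nonneg {ι : Type*} {t : ι → ℝ} (ht : ∀ i, 0 ≤ t i) (m : ℕ) :
    Monovary (fun i => t i ^ m) t :=
  fun i _ h => pow_le_pow_left₀ (ht i) h.le m

theorem pm_summand_eq {ι : Type*} [Fintype ι] (v x : ι → ℝ) (hv : ∀ k, v k ≠ 0) {m : ℕ}
    (hm : m ≠ 0) (k : ι) :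
    (∑ n, v n ^ 2) / v k ^ (m - 1) * x k ^ (m + 1)
        - ∑ j, v k * v j / v k ^ (m - 1) * x k ^ m * x j
      = ∑ j, v k ^ 2 * v j ^ 2 * ((x k / v k) ^ m * (x k / v k - x j / v j)) := by
  obtain ⟨p, rfl⟩ := Nat.exists_eq_add_one_of_ne_zero hm
  rw [sum_div, sum_mul, ← sum_sub_distrib]
  refine sum_congr rfl fun j _ => ?_
  have hvk := hv k
  have hvj := hv j
  simp only [Nat.add_sub_cancel, div_pow]
  field_simp
  ring

theorem pm_nonneg_on_orthant (N : ℕ) (v : Fin N → ℝ) (hv : ∀ k, 0 < v k)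
    (m : ℕ) (hm : 1 ≤ m) (x : Fin N → ℝ) (hx : ∀ k, 0 ≤ x k) :
    0 ≤ ∑ k : Fin N, ((∑ n : Fin N, (v n) ^ 2) / (v k) ^ (m - 1) * (x k) ^ (m + 1)
        - ∑ j : Fin N, (v k * v j) / (v k) ^ (m - 1) * (x k) ^ m * x j) := by
  have ht : ∀ k, 0 ≤ x k / v k := fun k => div_nonneg (hx k) (hv k).le
  rw [sum_congr rfl fun k _ => pm_summand_eq v x (fun k => (hv k).ne') (by omega) k]
  exact (monovary_pow_self_of_nonneg ht m).monovaryOn _ |>.sum_sum_mul_mul_sub_nonneg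
    fun k _ => sq_nonneg (v k)
end

section
/- Let m ≥ 2 be an integer, v₁*,...,v_N* > 0, x ∈ ℝ^N_{≥0}, and set x̄ = (Σ_j v_j* x_j)/(Σ_n v_n*²). Then p_m(x) = x̄ · p_{m−1}(x) + Σ_{k=1}^N (Σ_{n=1}^N v_n*²)/(v_k*)^{m−1} · x_k^{m−1} (x_k − v_k* x̄)², where p_m(x) = Σ_k ( (Σ_n v_n*²)/(v_k*)^{m−1} x_k^{m+1} − Σ_j (v_k* v_j*)/(v_k*)^{m−1} x_k^m x_j ). -/
/-!
Write `x̄ = ⟨v, x⟩ / ‖v‖²`. Pulling `x̄` out of the inner sums gives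
`p_m(x) = ∑ₖ ‖v‖² / vₖ^(m-1) · xₖ^m (xₖ - vₖ x̄)`, and the recursion is then the termwise identity
`xₖ = vₖ x̄ + (xₖ - vₖ x̄)` applied to one factor `xₖ`.
-/

open Finset

variable {ι : Type*} [Fintype ι]

/-- The polynomial `p_m` of the statement. -/
noncomputable def pSum (v x : ι → ℝ) (m : ℕ) : ℝ :=
  ∑ k, ((∑ n, v n ^ 2) / v k ^ (m - 1) * x k ^ (m + 1)
    - ∑ j, v k * v j / v k ^ (m - 1) * x k ^ m * x j)

/-- The paper's `x̄`: the coefficient of the orthogonal projection of `x` onto the line `ℝ v`. -/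
noncomputable def projCoeff (v x : ι → ℝ) : ℝ :=
  (∑ j, v j * x j) / ∑ n, v n ^ 2

lemma pSum_eq_sum_mul_sub_projCoeff (v x : ι → ℝ) (m : ℕ) :
    pSum v x m = ∑ k, (∑ n, v n ^ 2) / v k ^ (m - 1) * x k ^ m * (x k - v k * projCoeff v x) := by
  refine sum_congr rfl fun k _ => ?_
  have inner_sum : ∑ j, v k * v j / v k ^ (m - 1) * x k ^ m * x j
      = v k / v k ^ (m - 1) * x k ^ m * ∑ j, v j * x j := by
    rw [mul_sum]
    exact sum_congr rfl fun j _ => by ring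
  rw [inner_sum]
  by_cases hS : ∑ n, v n ^ 2 = 0
  · have hv : v k = 0 :=
      pow_eq_zero_iff two_ne_zero |>.1 <|
        (sum_eq_zero_iff_of_nonneg fun n _ => sq_nonneg (v n)).1 hS k (mem_univ k)
    simp [hS, hv]
  · unfold projCoeff
    field_simp
    ring

lemma pSum_add_two {v : ι → ℝ} (hv : ∀ k, v k ≠ 0) (x : ι → ℝ) (m : ℕ) :
    pSum v x (m + 2) = projCoeff v x * pSum v x (m + 1)
      + ∑ k, (∑ n, v n ^ 2) / v k ^ (m + 1) * x k ^ (m + 1) * (x k - v k * projCoeff v x) ^ 2 := by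
  simp only [pSum_eq_sum_mul_sub_projCoeff, mul_sum, ← sum_add_distrib]
  refine sum_congr rfl fun k _ => ?_
  have hvk := hv k
  simp only [Nat.add_sub_cancel, show m + 2 - 1 = m + 1 from rfl]
  field_simp
  ring

theorem pm_recursion_general (N : ℕ) (v : Fin N → ℝ) (hv : ∀ k, 0 < v k)
    (m : ℕ) (hm : 2 ≤ m) (x : Fin N → ℝ) :
    (∑ k : Fin N, ((∑ n : Fin N, (v n) ^ 2) / (v k) ^ (m - 1) * (x k) ^ (m + 1)
        - ∑ j : Fin N, (v k * v j) / (v k) ^ (m - 1) * (x k) ^ m * x j))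
    = ((∑ j : Fin N, v j * x j) / (∑ n : Fin N, (v n) ^ 2)) *
        (∑ k : Fin N, ((∑ n : Fin N, (v n) ^ 2) / (v k) ^ (m - 2) * (x k) ^ m
          - ∑ j : Fin N, (v k * v j) / (v k) ^ (m - 2) * (x k) ^ (m - 1) * x j))
      + ∑ k : Fin N, (∑ n : Fin N, (v n) ^ 2) / (v k) ^ (m - 1) * (x k) ^ (m - 1) *
          (x k - v k * ((∑ j : Fin N, v j * x j) / (∑ n : Fin N, (v n) ^ 2))) ^ 2 := by
  obtain ⟨m, rfl⟩ : ∃ m', m = m' + 2 := ⟨m - 2, by omega⟩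
  exact pSum_add_two (fun k => (hv k).ne') x m

theorem pm_recursion (N : ℕ) (v : Fin N → ℝ) (hv : ∀ k, 0 < v k)
    (m : ℕ) (hm : 2 ≤ m) (x : Fin N → ℝ) (hx : ∀ k, 0 ≤ x k) :
    (∑ k : Fin N, ((∑ n : Fin N, (v n) ^ 2) / (v k) ^ (m - 1) * (x k) ^ (m + 1)
        - ∑ j : Fin N, (v k * v j) / (v k) ^ (m - 1) * (x k) ^ m * x j))
    = ((∑ j : Fin N, v j * x j) / (∑ n : Fin N, (v n) ^ 2)) *
        (∑ k : Fin N, ((∑ n : Fin N, (v n) ^ 2) / (v k) ^ (m - 2) * (x k) ^ m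
          - ∑ j : Fin N, (v k * v j) / (v k) ^ (m - 2) * (x k) ^ (m - 1) * x j))
      + ∑ k : Fin N, (∑ n : Fin N, (v n) ^ 2) / (v k) ^ (m - 1) * (x k) ^ (m - 1) *
          (x k - v k * ((∑ j : Fin N, v j * x j) / (∑ n : Fin N, (v n) ^ 2))) ^ 2 :=
  pm_recursion_general N v hv m hm x
end

section
/- Let N ≥ 1, let θ*_1,...,θ*_N ∈ ℝ with θ*_1 = 0 and |θ*_j − θ*_k| ≤ θ̄ for all j,k, where θ̄ ∈ [0, π/2]. Then Σ_{k=1}^N Σ_{j=1}^N cos(θ*_j − θ*_k) ≥ N² (1 + cos θ̄)/2. -/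
/-!
Centre the angles at the midpoint `c` of their range, so that every `θ j - c` lies in
`[-θ̄/2, θ̄/2]`. The double sum is `‖∑ j, exp (i (θ j - c))‖² ≥ (∑ j, cos (θ j - c))²`,
and each cosine is at least `cos (θ̄/2) ≥ 0`, whence the bound
`N² cos² (θ̄/2) = N² (1 + cos θ̄)/2`.
-/

open Finset Real

variable {ι : Type*}

theorem sum_sum_cos_sub_eq_sq_add_sq [Fintype ι] (θ : ι → ℝ) (c : ℝ) :
    ∑ k, ∑ j, cos (θ j - θ k) =
      (∑ j, cos (θ j - c)) ^ 2 + (∑ j, sin (θ j - c)) ^ 2 := by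
  have expand : ∀ k, ∑ j, cos (θ j - θ k) =
      (∑ j, cos (θ j - c)) * cos (θ k - c) + (∑ j, sin (θ j - c)) * sin (θ k - c) := by
    intro k
    rw [sum_mul, sum_mul, ← sum_add_distrib]
    refine sum_congr rfl fun j _ => ?_
    rw [show θ j - θ k = (θ j - c) - (θ k - c) by ring, cos_sub]
  simp_rw [expand, sum_add_distrib, ← mul_sum]
  ring

theorem exists_forall_abs_sub_le_half [Finite ι] [Nonempty ι] {θ : ι → ℝ} {δ : ℝ}
    (h : ∀ j k, |θ j - θ k| ≤ δ) : ∃ c, ∀ j, |θ j - c| ≤ δ / 2 := by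
  obtain ⟨jmax, hmax⟩ := Finite.exists_max θ
  obtain ⟨jmin, hmin⟩ := Finite.exists_min θ
  have hspread : θ jmax - θ jmin ≤ δ := (le_abs_self _).trans (h _ _)
  refine ⟨(θ jmax + θ jmin) / 2, fun j => abs_le.2 ⟨?_, ?_⟩⟩
  · linarith [hmin j]
  · linarith [hmax j]

theorem cos_half_le_cos_of_abs_le {x δ : ℝ} (hδ : δ ≤ π) (hx : |x| ≤ δ / 2) :
    cos (δ / 2) ≤ cos x := by
  rw [← cos_abs x]
  exact cos_le_cos_of_nonneg_of_le_pi (abs_nonneg x) (by linarith [abs_nonneg x]) hx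

theorem card_sq_mul_one_add_cos_div_two_le_sum_sum_cos_sub [Fintype ι] {θ : ι → ℝ} {δ : ℝ}
    (hδ : δ ≤ π) (h : ∀ j k, |θ j - θ k| ≤ δ) :
    (Fintype.card ι : ℝ) ^ 2 * (1 + cos δ) / 2 ≤ ∑ k, ∑ j, cos (θ j - θ k) := by
  cases isEmpty_or_nonempty ι
  · simp
  obtain ⟨c, hc⟩ := exists_forall_abs_sub_le_half h
  have hδ0 : 0 ≤ δ := by simpa using h (Classical.arbitrary ι) (Classical.arbitrary ι)
  have hcos_nonneg : 0 ≤ cos (δ / 2) :=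
    cos_nonneg_of_mem_Icc ⟨by linarith [pi_pos], by linarith⟩
  have hsum_cos : Fintype.card ι * cos (δ / 2) ≤ ∑ j, cos (θ j - c) := by
    simpa using sum_le_sum fun j (_ : j ∈ univ) => cos_half_le_cos_of_abs_le hδ (hc j)
  calc (Fintype.card ι : ℝ) ^ 2 * (1 + cos δ) / 2
      = (Fintype.card ι * cos (δ / 2)) ^ 2 := by
        rw [mul_pow, cos_sq, show 2 * (δ / 2) = δ by ring]; ring
    _ ≤ (∑ j, cos (θ j - c)) ^ 2 := pow_le_pow_left₀ (by positivity) hsum_cos 2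
    _ ≤ (∑ j, cos (θ j - c)) ^ 2 + (∑ j, sin (θ j - c)) ^ 2 :=
        le_add_of_nonneg_right (sq_nonneg _)
    _ = ∑ k, ∑ j, cos (θ j - θ k) := (sum_sum_cos_sub_eq_sq_add_sq θ c).symm

theorem sum_cos_lower_bound_general (N : ℕ) (θ : Fin N → ℝ)
    (θbar : ℝ) (hθbar : θbar ∈ Set.Icc 0 (Real.pi / 2))
    (hdiff : ∀ j k, |θ j - θ k| ≤ θbar) :
    (N : ℝ) ^ 2 * (1 + Real.cos θbar) / 2 ≤
      ∑ k : Fin N, ∑ j : Fin N, Real.cos (θ j - θ k) := by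
  have hθbar_le_pi : θbar ≤ π := by linarith [hθbar.2, pi_pos]
  simpa using card_sq_mul_one_add_cos_div_two_le_sum_sum_cos_sub hθbar_le_pi hdiff

theorem sum_cos_lower_bound (N : ℕ) (hN : 1 ≤ N) (θ : Fin N → ℝ)
    (θbar : ℝ) (hθbar : θbar ∈ Set.Icc 0 (Real.pi / 2))
    (h0 : θ ⟨0, hN⟩ = 0)
    (hdiff : ∀ j k, |θ j - θ k| ≤ θbar) :
    (N : ℝ) ^ 2 * (1 + Real.cos θbar) / 2 ≤
      ∑ k : Fin N, ∑ j : Fin N, Real.cos (θ j - θ k) :=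
  sum_cos_lower_bound_general N θ θbar hθbar hdiff
end
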